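/- Turning 90° in the ahead-emergency mode breaks the head-on collision course: if two point vessels approach each other exactly head-on (p_obs − p_ego = d·u_ego with d > 0 and u_obs = −u_ego) with constant speeds v_ego, v_obs > 0, then after the ego instantly changes its heading to be perpendicular to its original orientation (new unit direction u'_ego with ⟨u'_ego, u_ego⟩ = 0), the squared distance between the vessels, f(t) = ‖p_obs + t v_obs u_obs − p_ego − t v_ego u'_ego‖², satisfies min over t ≥ 0 of f(t) = d²·v_ego²/(v_ego² + v_obs²), which is strictly positive. -/

import Mathlib

/-- Turning 90° in the ahead-emergency mode breaks the head-on collision course: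
if two point vessels approach exactly head-on (`p_obs = p_ego + d·u_ego`, `d > 0`,
`u_obs = −u_ego`) with constant speeds `v_ego, v_obs > 0`, and the ego instantly
changes heading to a unit direction `u'_ego` orthogonal to `u_ego`, then the minimum
over `t ≥ 0` of the squared inter-vessel distance equals
`d²·v_ego²/(v_ego² + v_obs²)`, which is strictly positive. -/
theorem ahead_turn_min_squared_distance
    (pego pobs uego u'ego uobs : EuclideanSpace ℝ (Fin 2)) (d vego vobs : ℝ)
    (hd : 0 < d) (hvego : 0 < vego) (hvobs : 0 < vobs)
    (huego : ‖uego‖ = 1) (hu' : ‖u'ego‖ = 1)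
    (horth : (inner ℝ u'ego uego : ℝ) = 0)
    (hobs : pobs = pego + d • uego) (huobs : uobs = -uego) :
    IsLeast ((fun t : ℝ =>
        ‖(pobs + t • (vobs • uobs)) - (pego + t • (vego • u'ego))‖ ^ 2) ''
          Set.Ici 0)
      (d ^ 2 * vego ^ 2 / (vego ^ 2 + vobs ^ 2)) ∧
    0 < d ^ 2 * vego ^ 2 / (vego ^ 2 + vobs ^ 2) := by
  have hS : 0 < vego ^ 2 + vobs ^ 2 := by positivity
  have key : ∀ t : ℝ, ‖(pobs + t • (vobs • uobs)) - (pego + t • (vego • u'ego))‖ ^ 2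
      = (d - t * vobs) ^ 2 + (t * vego) ^ 2 := by
    intro t
    have hv : (pobs + t • (vobs • uobs)) - (pego + t • (vego • u'ego))
        = (d - t * vobs) • uego + (-(t * vego)) • u'ego := by
      subst hobs huobs
      module
    have hin : (inner ℝ ((d - t * vobs) • uego) ((-(t * vego)) • u'ego) : ℝ) = 0 := by
      rw [inner_smul_left, inner_smul_right, real_inner_comm, horth]; ring
    rw [hv, norm_add_sq_real, hin, norm_smul, norm_smul, huego, hu']
    simp [mul_pow, sq_abs]
  constructor
  · constructor
    · refine ⟨d * vobs / (vego ^ 2 + vobs ^ 2), ?_, ?_⟩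
      · have : (0:ℝ) ≤ d * vobs / (vego ^ 2 + vobs ^ 2) := by positivity
        exact this
      · simp only [key]
        field_simp
        ring
    · rintro x ⟨t, ht, rfl⟩
      simp only [key]
      rw [div_le_iff₀ hS]
      nlinarith [sq_nonneg (t * (vego ^ 2 + vobs ^ 2) - d * vobs)]
  · positivity
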